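/- arXiv:1611.01338 — 2 statements merged into one kernel-verified Lean document; each statement's English description precedes it below -/
import Mathlib

section
/- For all complex numbers z, w and real t, the Gaussian integral over (x,y) ∈ ℝ² of exp(-ν[(x - z/√2)² + (y - w/√2)² + (t - (x+iy)/√2)²]) equals (π/ν)·exp(-ν(t - (z+iw)/2)²), where ν > 0. -/
/-!
Integrate out `y` and then `x`, each time completing the square in a one-dimensional complex
Gaussian (`integral_cexp_quadratic`). Fubini applies because the only cross term, `-iνxy`, is
purely imaginary: it does not change the modulus, so the integrand is dominated by a product of
real Gaussians in `x` and in `y`. The two Gaussian factors `√(2π/ν)` and `√(π/(2ν))` multiply to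
`π/ν`, reflecting that the quadratic form has determinant `1`.
-/

open Complex Real MeasureTheory

section

variable {a b c : ℂ}

lemma re_sq_div_four_mul_nonneg (hb : b.re = 0) (hc : c.re ≤ 0) : 0 ≤ (b ^ 2 / (4 * c)).re := by
  have hre : (b ^ 2 / (4 * c)).re = b.im ^ 2 * -c.re / (4 * normSq c) := by
    simp only [sq, div_re, mul_re, hb, mul_zero, zero_sub, re_ofNat, im_ofNat, zero_mul, sub_zero,
      neg_mul, normSq_mul, normSq_ofNat, mul_im, add_zero, zero_div, mul_neg]
    ring
  rw [hre]
  exact div_nonneg (mul_nonneg (sq_nonneg _) (neg_nonneg.2 hc))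
    (mul_nonneg zero_le_four (normSq_nonneg c))

lemma integrable_cexp_quadratic_prod (ha : a.re < 0) (hb : b.re = 0) (hc : c.re < 0)
    (p q r : ℂ) :
    Integrable (fun v : ℝ × ℝ ↦
      cexp (a * v.1 ^ 2 + b * v.1 * v.2 + c * v.2 ^ 2 + p * v.1 + q * v.2 + r)) := by
  have hprod := (integrable_cexp_quadratic' ha p 0).mul_prod (integrable_cexp_quadratic' hc q r)
  refine hprod.mono (by fun_prop) (.of_forall fun v ↦ ?_)
  have hsplit : cexp (a * v.1 ^ 2 + b * v.1 * v.2 + c * v.2 ^ 2 + p * v.1 + q * v.2 + r)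
      = cexp (a * v.1 ^ 2 + p * v.1 + 0) * cexp (c * v.2 ^ 2 + q * v.2 + r)
        * cexp (b * v.1 * v.2) := by
    rw [← Complex.exp_add, ← Complex.exp_add]
    ring_nf
  have hunit : ‖cexp (b * v.1 * v.2)‖ = 1 := by simp [norm_exp, hb]
  rw [hsplit, norm_mul, hunit, mul_one]

theorem integral_cexp_quadratic_prod (ha : a.re < 0) (hb : b.re = 0) (hc : c.re < 0)
    (p q r : ℂ) :
    ∫ v : ℝ × ℝ, cexp (a * v.1 ^ 2 + b * v.1 * v.2 + c * v.2 ^ 2 + p * v.1 + q * v.2 + r)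
      = (π / -c) ^ (1 / 2 : ℂ) * (π / -(a - b ^ 2 / (4 * c))) ^ (1 / 2 : ℂ)
        * cexp (r - q ^ 2 / (4 * c)
          - (p - b * q / (2 * c)) ^ 2 / (4 * (a - b ^ 2 / (4 * c)))) := by
  have hc0 : c ≠ 0 := by rintro rfl; simp at hc
  have hschur : (a - b ^ 2 / (4 * c)).re < 0 := by
    rw [sub_re]
    linarith [re_sq_div_four_mul_nonneg hb hc.le]
  have hslice (x : ℝ) : ∫ y : ℝ, cexp (a * x ^ 2 + b * x * y + c * y ^ 2 + p * x + q * y + r)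
      = (π / -c) ^ (1 / 2 : ℂ) * cexp ((a - b ^ 2 / (4 * c)) * x ^ 2
        + (p - b * q / (2 * c)) * x + (r - q ^ 2 / (4 * c))) := by
    calc _ = ∫ y : ℝ, cexp (c * y ^ 2 + (b * x + q) * y + (a * x ^ 2 + p * x + r)) := by
          congr 1; ext y; congr 1; ring
      _ = _ := by rw [integral_cexp_quadratic hc]; congr 2; field
  rw [Measure.volume_eq_prod, integral_prod _ (integrable_cexp_quadratic_prod ha hb hc p q r)]
  simp only [hslice]
  rw [integral_const_mul, integral_cexp_quadratic hschur, mul_assoc]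

end

lemma ofReal_cpow_half_mul_ofReal_cpow_half {u v s : ℝ} (hu : 0 ≤ u) (hv : 0 ≤ v) (hs : 0 < s)
    (h : u * v = s ^ 2) : (u : ℂ) ^ (1 / 2 : ℂ) * (v : ℂ) ^ (1 / 2 : ℂ) = s := by
  rw [← mul_cpow_ofReal_nonneg hu hv, ← ofReal_mul, h, ofReal_pow, one_div,
    sq_cpow_two_inv (by simpa using hs)]

theorem gaussian_composition_integral (ν : ℝ) (hν : 0 < ν) (z w : ℂ) (t : ℝ) :
    ∫ p : ℝ × ℝ,
      Complex.exp (-(ν : ℂ) * (((p.1 : ℂ) - z / (Real.sqrt 2 : ℂ)) ^ 2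
        + ((p.2 : ℂ) - w / (Real.sqrt 2 : ℂ)) ^ 2
        + ((t : ℂ) - ((p.1 : ℂ) + Complex.I * (p.2 : ℂ)) / (Real.sqrt 2 : ℂ)) ^ 2))
    = ((Real.pi / ν : ℝ) : ℂ) * Complex.exp (-(ν : ℂ) * ((t : ℂ) - (z + Complex.I * w) / 2) ^ 2) := by
  have hsqrt : ((√2 : ℝ) : ℂ) ^ 2 = 2 := by norm_cast; simp
  have hν0 : (ν : ℂ) ≠ 0 := by exact_mod_cast hν.ne'
  have hexpand (x y : ℝ) :
      -(ν : ℂ) * ((x - z / √2) ^ 2 + (y - w / √2) ^ 2 + (t - (x + I * y) / √2) ^ 2)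
        = (-3 / 2 * ν) * x ^ 2 + (-I * ν) * x * y + (-ν / 2) * y ^ 2 + (√2 * ν * (z + t)) * x
          + (√2 * ν * (w + I * t)) * y + (-ν * (z ^ 2 / 2 + w ^ 2 / 2 + t ^ 2)) := by
    grind [I_sq]
  simp only [hexpand]
  rw [integral_cexp_quadratic_prod (by simp; linarith) (by simp) (by simp; linarith)]
  have hschur : -3 / 2 * (ν : ℂ) - (-I * ν) ^ 2 / (4 * (-ν / 2)) = -2 * ν := by
    simp only [mul_pow, neg_sq, I_sq]; field_simp; ring
  rw [hschur]
  congr 1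
  · rw [show (π : ℂ) / -(-ν / 2) = ((2 * π / ν : ℝ) : ℂ) by push_cast; ring,
      show (π : ℂ) / -(-2 * ν) = ((π / (2 * ν) : ℝ) : ℂ) by push_cast; ring]
    exact ofReal_cpow_half_mul_ofReal_cpow_half (by positivity) (by positivity) (by positivity)
      (by field_simp)
  · congr 1
    field_simp
    grind [I_sq]
end

section
/- For ν > 0, x ∈ ℝ and ζ ∈ ℂ, the rescaled Fourier transform of the Hermite generating kernel satisfies (ν/(2π))^{1/2} ∫_ℝ exp((ν/2)(x - iu)²) · S(ζ, u) du = S(-iζ, x), where S(ζ, u) = (ν/π)^{3/4} exp(-(ν/2)ζ² + √2 ν ζ u). -/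
/-! The integrand is a constant times the Gaussian `exp(-(ν/2)u² + ν(√2 ζ - i x)u)`. Its integral
is `√(2π/ν) · exp(ν(√2 ζ - i x)²/2)`; the factor `√(2π/ν)` cancels the normalisation and the
exponents combine to `-(ν/2)(-iζ)² + √2 ν (-iζ) x`. -/

open Complex Real MeasureTheory

/-- The Hermite generating kernel `S(ζ,u) = (ν/π)^{3/4} exp(-(ν/2)ζ² + √2 ν ζ u)`. -/
noncomputable def hermiteKernel (ν : ℝ) (ζ : ℂ) (u : ℝ) : ℂ :=
  (((ν / Real.pi) ^ ((3 : ℝ) / 4) : ℝ) : ℂ)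
    * Complex.exp (-((ν : ℂ) / 2) * ζ ^ 2 + (Real.sqrt 2 : ℂ) * (ν : ℂ) * ζ * (u : ℂ))

theorem integral_cexp_neg_mul_sq_add_mul {b : ℝ} (hb : 0 < b) (c : ℂ) :
    ∫ u : ℝ, cexp (-(b : ℂ) * u ^ 2 + c * u) = (√(π / b) : ℂ) * cexp (c ^ 2 / (4 * b)) := by
  have hb' : (-(b : ℂ)).re < 0 := by simpa using hb
  have hsqrt : ((π : ℂ) / -(-(b : ℂ))) ^ (1 / 2 : ℂ) = (√(π / b) : ℂ) := by
    rw [neg_neg, ← ofReal_div, Real.sqrt_eq_rpow, ofReal_cpow (by positivity)]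
    norm_num
  calc ∫ u : ℝ, cexp (-(b : ℂ) * u ^ 2 + c * u)
      = ∫ u : ℝ, cexp (-(b : ℂ) * u ^ 2 + c * u + 0) := by simp_rw [add_zero]
    _ = _ := integral_cexp_quadratic hb' c 0
    _ = _ := by rw [hsqrt, zero_sub, mul_neg, div_neg, neg_neg]

theorem cexp_mul_hermiteKernel_eq_gaussian (ν x u : ℝ) (ζ : ℂ) :
    cexp ((ν : ℂ) / 2 * ((x : ℂ) - I * u) ^ 2) * hermiteKernel ν ζ u
      = (((ν / π) ^ ((3 : ℝ) / 4) : ℝ) : ℂ) * cexp ((ν : ℂ) / 2 * ((x : ℂ) ^ 2 - ζ ^ 2))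
        * cexp (-((ν / 2 : ℝ) : ℂ) * u ^ 2 + (ν : ℂ) * (√2 * ζ - I * x) * u) := by
  rw [hermiteKernel, mul_left_comm, ← Complex.exp_add, mul_assoc _ (cexp _), ← Complex.exp_add]
  congr 2
  push_cast
  linear_combination (ν : ℂ) / 2 * (u : ℂ) ^ 2 * I_sq

theorem fourier_of_hermite_kernel (ν : ℝ) (hν : 0 < ν) (x : ℝ) (ζ : ℂ) :
    ((Real.sqrt (ν / (2 * Real.pi)) : ℝ) : ℂ)
      * ∫ u : ℝ, Complex.exp (((ν : ℂ) / 2) * ((x : ℂ) - Complex.I * (u : ℂ)) ^ 2)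
          * hermiteKernel ν ζ u
    = hermiteKernel ν (-Complex.I * ζ) x := by
  have hsqrt : √(ν / (2 * π)) * √(π / (ν / 2)) = 1 := by
    rw [← Real.sqrt_mul (by positivity), Real.sqrt_eq_one]
    field_simp
  have hexponent : (ν : ℂ) / 2 * ((x : ℂ) ^ 2 - ζ ^ 2)
      + ((ν : ℂ) * (√2 * ζ - I * x)) ^ 2 / (4 * ((ν / 2 : ℝ) : ℂ))
      = -((ν : ℂ) / 2) * (-I * ζ) ^ 2 + (√2 : ℂ) * ν * (-I * ζ) * x := by
    have h2 : ((√2 : ℝ) : ℂ) ^ 2 = 2 := by norm_cast; simp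
    have hν' : (ν : ℂ) ≠ 0 := ofReal_ne_zero.mpr hν.ne'
    push_cast
    field_simp
    linear_combination 4 * ζ ^ 2 * h2 + 4 * ((x : ℂ) ^ 2 + ζ ^ 2) * I_sq
  simp_rw [cexp_mul_hermiteKernel_eq_gaussian, integral_const_mul,
    integral_cexp_neg_mul_sq_add_mul (half_pos hν)]
  calc _ = (((ν / π) ^ ((3 : ℝ) / 4) : ℝ) : ℂ) * ((√(ν / (2 * π)) * √(π / (ν / 2)) : ℝ) : ℂ)
        * cexp ((ν : ℂ) / 2 * ((x : ℂ) ^ 2 - ζ ^ 2)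
          + ((ν : ℂ) * (√2 * ζ - I * x)) ^ 2 / (4 * ((ν / 2 : ℝ) : ℂ))) := by
        rw [Complex.exp_add]; push_cast; ring
    _ = _ := by rw [hsqrt, hexponent, hermiteKernel]; simp
end
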